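/- arXiv:2405.10192 — 6 statements merged into one kernel-verified Lean document; each statement's English description precedes it below -/
import Mathlib

section
/- If $I$ contains a non-zerodivisor, then for every $k \geq 0$, $\widetilde{I^{k+1}} : I = \widetilde{I^k}$, where $\widetilde{J}$ denotes the Ratliff-Rush closure of $J$ (with convention $\widetilde{I^0} = R$). -/
/-- The Ratliff-Rush closure `⋃ₘ (I^(m+1) : I^m)` of an ideal `I`. -/
noncomputable def ratliffRush {R : Type*} [CommRing R] (I : Ideal R) : Ideal R :=
  ⨆ m : ℕ, Submodule.colon (I ^ (m + 1)) ((I ^ m : Ideal R) : Set R)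

private lemma rr_mem_colon_iff {R : Type*} [CommRing R] (J K : Ideal R) (x : R) :
    x ∈ Submodule.colon J (K : Set R) ↔ Ideal.span {x} * K ≤ J := by
  rw [Submodule.mem_colon, Ideal.span_singleton_mul_le_iff]
  simp [smul_eq_mul]

private lemma rr_step {R : Type*} [CommRing R] (I : Ideal R) (x : R) {a b : ℕ}
    (h : Ideal.span {x} * I ^ a ≤ I ^ b) (j : ℕ) :
    Ideal.span {x} * I ^ (a + j) ≤ I ^ (b + j) := by
  calc Ideal.span {x} * I ^ (a + j) = Ideal.span {x} * I ^ a * I ^ j := by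
        rw [pow_add, mul_assoc]
    _ ≤ I ^ b * I ^ j := Ideal.mul_mono_left h
    _ = I ^ (b + j) := (pow_add I b j).symm

private lemma rr_chain_mono {R : Type*} [CommRing R] (I : Ideal R) :
    Monotone fun n => Submodule.colon (I ^ (n + 1)) ((I ^ n : Ideal R) : Set R) := by
  apply monotone_nat_of_le_succ
  intro n x hx
  rw [rr_mem_colon_iff] at *
  simpa using rr_step I x hx 1

private lemma rr_mem_iff {R : Type*} [CommRing R] (I : Ideal R) (x : R) :
    x ∈ ratliffRush I ↔ ∃ m, Ideal.span {x} * I ^ m ≤ I ^ (m + 1) := by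
  unfold ratliffRush
  rw [Submodule.mem_iSup_of_directed _ (rr_chain_mono I).directed_le]
  simp only [rr_mem_colon_iff]

private lemma rr_stab {R : Type*} [CommRing R] [IsNoetherianRing R] (I : Ideal R) :
    ∃ N : ℕ, ratliffRush I = Submodule.colon (I ^ (N + 1)) ((I ^ N : Ideal R) : Set R) := by
  obtain ⟨N, hN⟩ := monotone_stabilizes_iff_noetherian.mpr inferInstance
    (⟨fun n => Submodule.colon (I ^ (n + 1)) ((I ^ n : Ideal R) : Set R), rr_chain_mono I⟩ : ℕ →o Ideal R)
  unfold ratliffRush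
  refine ⟨N, le_antisymm (iSup_le fun n => ?_) (le_iSup (fun m => Submodule.colon (I ^ (m + 1)) ((I ^ m : Ideal R) : Set R)) N)⟩
  rcases le_total n N with h | h
  · exact rr_chain_mono I h
  · exact (hN n h).ge

/-- If `I` contains a non-zerodivisor, then `(I^(k+1))~ : I = (I^k)~` for all `k ≥ 0`. -/
theorem ratliffRush_colon {R : Type*} [CommRing R] [IsNoetherianRing R] (I : Ideal R)
    (h : ∃ x ∈ I, x ∈ nonZeroDivisors R) :
    ∀ k : ℕ, Submodule.colon (ratliffRush (I ^ (k + 1))) I = ratliffRush (I ^ k) := by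
  intro k
  ext x
  rw [rr_mem_colon_iff, rr_mem_iff]
  constructor
  · intro hx
    rcases Nat.eq_zero_or_pos k with rfl | hk
    · exact ⟨0, by simp⟩
    obtain ⟨N, hN⟩ := rr_stab (I ^ (k + 1))
    rw [hN] at hx
    -- key : span {x} * I ^ ((k+1)*N + 1) ≤ I ^ ((k+1)*N + 1 + k)
    have key : Ideal.span {x} * I ^ ((k + 1) * N + 1) ≤ I ^ ((k + 1) * N + 1 + k) := by
      have h1 : Ideal.span {x} * I * I ^ ((k + 1) * N) ≤ I ^ ((k + 1) * (N + 1)) := by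
        rw [Ideal.mul_le]
        intro r hr s hs
        have hr' : r ∈ Submodule.colon ((I ^ (k + 1)) ^ (N + 1)) (((I ^ (k + 1)) ^ N : Ideal R) : Set R) := hx hr
        have := Submodule.mem_colon.mp hr' s (by rwa [← pow_mul])
        simpa [smul_eq_mul, ← pow_mul] using this
      calc Ideal.span {x} * I ^ ((k + 1) * N + 1)
          = Ideal.span {x} * I * I ^ ((k + 1) * N) := by
            rw [mul_assoc, ← pow_succ']
        _ ≤ I ^ ((k + 1) * (N + 1)) := h1
        _ = I ^ ((k + 1) * N + 1 + k) := by ring_nf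
    -- now choose m = (k+1)*N + 1 ; need span{x} * (I^k)^m ≤ (I^k)^(m+1)
    set M := (k + 1) * N + 1 with hM
    refine ⟨M, ?_⟩
    have hge : M ≤ k * M := Nat.le_mul_of_pos_left M hk
    obtain ⟨j, hj⟩ := Nat.exists_eq_add_of_le hge
    have this1 := rr_step I x key j
    rw [← pow_mul, ← pow_mul]
    have harith : k * (M + 1) = M + k + j := by rw [Nat.mul_succ, hj]; ring
    rw [← hj] at this1
    rw [harith]
    exact this1
  · rintro ⟨m, hm⟩
    rw [Ideal.span_singleton_mul_le_iff]
    intro y hy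
    rw [rr_mem_iff]
    refine ⟨m, ?_⟩
    rw [← pow_mul, ← pow_mul] at hm ⊢
    have hxy : Ideal.span {x * y} ≤ Ideal.span {x} * I := by
      rw [← Ideal.span_singleton_mul_span_singleton]
      exact Ideal.mul_mono_right ((Ideal.span_singleton_le_iff_mem _).mpr hy)
    have h2 : Ideal.span {x * y} * I ^ ((k + 1) * m) ≤
        Ideal.span {x} * I ^ ((k + 1) * m + 1) := by
      calc Ideal.span {x * y} * I ^ ((k + 1) * m)
          ≤ Ideal.span {x} * I * I ^ ((k + 1) * m) := Ideal.mul_mono_left hxy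
        _ = Ideal.span {x} * I ^ ((k + 1) * m + 1) := by rw [mul_assoc, ← pow_succ']
    have h3 := rr_step I x hm (m + 1)
    have e1 : k * m + (m + 1) = (k + 1) * m + 1 := by ring
    have e2 : k * (m + 1) + (m + 1) = (k + 1) * (m + 1) := by ring
    rw [e1, e2] at h3
    exact le_trans h2 h3
end

section
/- If $I$ contains a non-zerodivisor, then $\widetilde{I^m} = I^m$ for all $m \gg 0$, i.e., there exists $N$ such that $\widetilde{I^m} = I^m$ for all $m \geq N$. -/
/-- If `I` contains a non-zerodivisor, then `(I^m)~ = I^m` for all `m ≫ 0`. -/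
theorem ratliffRush_pow_eventually_eq {R : Type*} [CommRing R] [IsNoetherianRing R]
    (I : Ideal R) (h : ∃ x ∈ I, x ∈ nonZeroDivisors R) :
    ∃ N : ℕ, ∀ m ≥ N, ratliffRush (I ^ m) = I ^ m := by
  classical
  obtain ⟨x, hxI, hx⟩ := h
  set sx : Ideal R := Ideal.span {x} with hsx
  -- cancellation by the nonzerodivisor x
  have hcancel : ∀ a b : R, x * a = x * b → a = b := by
    intro a b hab
    have h0 : (a - b) * x = 0 := by ring_nf; linear_combination hab
    have := hx.2 _ h0
    exact sub_eq_zero.mp this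
  -- Artin-Rees
  obtain ⟨k, hk⟩ := Ideal.exists_pow_inf_eq_pow_smul I (sx : Submodule R R)
  set K : Ideal R := Submodule.colon (I ^ k) sx with hKdef
  have htop : ∀ m : ℕ, (I ^ m • (⊤ : Submodule R R) : Submodule R R) = I ^ m := by
    intro m; rw [Ideal.smul_eq_mul, Ideal.mul_top]
  have hKs : K * sx ≤ I ^ k := by
    rw [Ideal.mul_le]
    intro r hr s hs
    have := Submodule.mem_colon.mp hr s hs
    rwa [smul_eq_mul] at this
  -- `I^k ⊓ (x) = (x) * K`
  have hinf : (I ^ k ⊓ sx : Ideal R) = sx * K := by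
    apply le_antisymm
    · rintro w ⟨hw1, hw2⟩
      obtain ⟨r, hr⟩ := Ideal.mem_span_singleton'.mp hw2
      have hrK : r ∈ K := by
        rw [hKdef, Submodule.mem_colon]
        intro p hp
        obtain ⟨s, hs⟩ := Ideal.mem_span_singleton'.mp hp
        have hrp : r • p = s * w := by rw [smul_eq_mul, ← hs, ← hr]; ring
        rw [hrp]
        exact Ideal.mul_mem_left _ _ hw1
      have hw : w = x * r := by rw [← hr]; ring
      rw [hw]
      exact Ideal.mul_mem_mul (Ideal.mem_span_singleton_self x) hrK
    · refine le_inf ?_ (by rw [mul_comm]; exact Ideal.mul_le_right)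
      rw [mul_comm]; exact hKs
  -- extraction : if a*x ∈ I^m • (I^k•⊤ ⊓ (x)) then a ∈ I^m * K
  have hext : ∀ (m : ℕ) (a : R),
      a * x ∈ I ^ m • ((I ^ k • (⊤ : Submodule R R)) ⊓ (sx : Submodule R R)) →
      a ∈ I ^ m * K := by
    intro m a ha
    rw [htop k] at ha
    rw [Ideal.smul_eq_mul] at ha
    have hre : I ^ m * (I ^ k ⊓ sx) = sx * (I ^ m * K) := by
      rw [hinf, mul_left_comm]
    rw [hre] at ha
    obtain ⟨b, hb, hxb⟩ := Ideal.mem_span_singleton_mul.mp ha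
    have : a = b := (hcancel b a (by rw [hxb, mul_comm])).symm
    rwa [this]
  -- the filtration G with G.N n = (I^(n+1) : x)
  have Gsmul : ∀ n : ℕ, I • Submodule.colon (I ^ (n + 1)) sx
      ≤ Submodule.colon (I ^ (n + 1 + 1)) sx := by
    intro n
    rw [Ideal.smul_eq_mul, Ideal.mul_le]
    intro a haI b hb
    rw [Submodule.mem_colon]
    intro p hp
    have hbp := Submodule.mem_colon.mp hb p hp
    rw [smul_eq_mul] at hbp ⊢
    have : a * b * p = a * (b * p) := by ring
    rw [this, pow_succ]
    rw [mul_comm (I ^ (n+1)) I]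
    exact Ideal.mul_mem_mul haI hbp
  let G : I.Filtration R :=
    { N := fun n => Submodule.colon (I ^ (n + 1)) sx
      mono := fun n => by
        intro r hr
        rw [Submodule.mem_colon] at hr ⊢
        intro p hp
        exact Ideal.pow_le_pow_right (by omega) (hr p hp)
      smul_le := Gsmul }
  have hGstab : G.Stable := by
    refine ⟨k, fun n hn => ?_⟩
    apply le_antisymm (G.smul_le n)
    intro a ha
    have haxmem : a * x ∈ (I ^ (n + 1 + 1) : Ideal R) ⊓ sx := by
      constructor
      · have := Submodule.mem_colon.mp ha x (Ideal.mem_span_singleton_self x)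
        rwa [smul_eq_mul] at this
      · exact Ideal.mem_span_singleton'.mpr ⟨a, rfl⟩
    have h2 : a * x ∈ I ^ (n + 2 - k) • ((I ^ k • (⊤ : Submodule R R)) ⊓ (sx : Submodule R R)) := by
      have hk2 := hk (n + 2) (by omega)
      rw [htop (n + 2)] at hk2
      have : (n + 1 + 1 : ℕ) = n + 2 := by omega
      rw [this] at haxmem
      rw [← hk2]
      exact haxmem
    have h3 : a ∈ I ^ (n + 2 - k) * K := hext _ _ h2
    have he : n + 2 - k = (n + 1 - k) + 1 := by omega
    rw [he, pow_succ, mul_comm (I ^ (n + 1 - k)) I, mul_assoc] at h3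
    have h4 : I ^ (n + 1 - k) * K ≤ Submodule.colon (I ^ (n + 1)) sx := by
      intro b hb
      rw [Submodule.mem_colon]
      intro p hp
      have hmem : b * p ∈ (I ^ (n + 1 - k) * K) * sx := Ideal.mul_mem_mul hb hp
      have h5 : (I ^ (n + 1 - k) * K) * sx ≤ I ^ (n + 1) := by
        rw [mul_assoc]
        calc I ^ (n + 1 - k) * (K * sx) ≤ I ^ (n + 1 - k) * I ^ k :=
              Ideal.mul_mono_right hKs
          _ = I ^ (n + 1) := by rw [← pow_add]; congr 1; omega
      rw [smul_eq_mul]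
      exact h5 hmem
    show a ∈ I • Submodule.colon (I ^ (n + 1)) sx
    rw [Ideal.smul_eq_mul]
    exact Ideal.mul_mono_right h4 h3
  -- the filtration F with F.N n = (I^(n+1) : I)
  let F : I.Filtration R :=
    { N := fun n => Submodule.colon (I ^ (n + 1)) I
      mono := fun n => by
        intro r hr
        rw [Submodule.mem_colon] at hr ⊢
        intro p hp
        exact Ideal.pow_le_pow_right (by omega) (hr p hp)
      smul_le := fun n => by
        rw [Ideal.smul_eq_mul, Ideal.mul_le]
        intro a haI b hb
        rw [Submodule.mem_colon]
        intro p hp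
        have hbp := Submodule.mem_colon.mp hb p hp
        rw [smul_eq_mul] at hbp ⊢
        have : a * b * p = a * (b * p) := by ring
        rw [this, pow_succ, mul_comm (I ^ (n + 1)) I]
        exact Ideal.mul_mem_mul haI hbp }
  have hFG : F ≤ G := by
    show F.N ≤ G.N
    intro n r hr
    rw [Submodule.mem_colon] at hr ⊢
    intro p hp
    exact hr p (Ideal.span_le.mpr (Set.singleton_subset_iff.mpr hxI) hp)
  have hFstab : F.Stable := hGstab.of_le hFG
  obtain ⟨n₀, hn₀⟩ := hFstab
  -- (I^(n+1) : I) = I^n for n ≥ n₀ + 1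
  have hcol1 : ∀ n ≥ n₀ + 1, Submodule.colon (I ^ (n + 1)) I = I ^ n := by
    have key : ∀ j : ℕ, F.N (n₀ + 1 + j) ≤ I ^ (n₀ + 1 + j) := by
      intro j
      induction j with
      | zero =>
        have h1 : F.N (n₀ + 1) = I • F.N n₀ := (hn₀ n₀ le_rfl).symm
        rw [h1, Ideal.smul_eq_mul]
        have : F.N n₀ * I ≤ I ^ (n₀ + 1) := by
          rw [Ideal.mul_le]
          intro r hr s hs
          have := Submodule.mem_colon.mp hr s hs
          rwa [smul_eq_mul] at this
        calc I * F.N n₀ = F.N n₀ * I := mul_comm _ _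
          _ ≤ I ^ (n₀ + 1) := this
      | succ j ih =>
        have h1 : F.N (n₀ + 1 + j + 1) = I • F.N (n₀ + 1 + j) :=
          (hn₀ (n₀ + 1 + j) (by omega)).symm
        have : n₀ + 1 + (j + 1) = n₀ + 1 + j + 1 := by omega
        rw [this, h1, Ideal.smul_eq_mul]
        calc I * F.N (n₀ + 1 + j) ≤ I * I ^ (n₀ + 1 + j) := Ideal.mul_mono_right ih
          _ = I ^ (n₀ + 1 + j + 1) := by rw [pow_succ, mul_comm]
    intro n hn
    apply le_antisymm
    · have := key (n - (n₀ + 1))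
      have hne : n₀ + 1 + (n - (n₀ + 1)) = n := by omega
      rw [hne] at this
      exact this
    · intro r hr
      rw [Submodule.mem_colon]
      intro p hp
      rw [smul_eq_mul, pow_succ]
      exact Ideal.mul_mem_mul hr hp
  -- iterate: (I^(m+j) : I^j) = I^m for m ≥ n₀ + 1
  have hcolj : ∀ m ≥ n₀ + 1, ∀ j : ℕ, Submodule.colon (I ^ (m + j)) ((I ^ j : Ideal R) : Set R) = I ^ m := by
    intro m hm j
    induction j with
    | zero =>
      apply le_antisymm
      · intro r hr
        have := Submodule.mem_colon.mp hr 1 (by rw [pow_zero, Ideal.one_eq_top]; exact Submodule.mem_top)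
        rwa [smul_eq_mul, mul_one, add_zero] at this
      · intro r hr
        rw [Submodule.mem_colon]
        intro p hp
        rw [pow_zero] at hp
        rw [smul_eq_mul, add_zero]
        exact Ideal.mul_mem_right p _ hr
    | succ j ih =>
      apply le_antisymm
      · intro r hr
        rw [← ih, Submodule.mem_colon]
        intro q hq
        rw [smul_eq_mul]
        have hmj : m + j ≥ n₀ + 1 := by omega
        rw [← hcol1 (m + j) hmj, Submodule.mem_colon]
        intro y hy
        rw [smul_eq_mul]
        have h1 : r * q * y = r * (q * y) := by ring
        rw [h1]
        have hqy : q * y ∈ I ^ (j + 1) := by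
          rw [pow_succ]
          exact Ideal.mul_mem_mul hq hy
        have := Submodule.mem_colon.mp hr (q * y) hqy
        rw [smul_eq_mul] at this
        have h2 : m + j + 1 = m + (j + 1) := by omega
        rw [h2]
        exact this
      · intro r hr
        rw [Submodule.mem_colon]
        intro p hp
        rw [smul_eq_mul]
        have : I ^ m * I ^ (j + 1) = I ^ (m + (j + 1)) := by rw [← pow_add]
        rw [← this]
        exact Ideal.mul_mem_mul hr hp
  refine ⟨n₀ + 1, fun m hm => ?_⟩
  have hterm : ∀ kk : ℕ, Submodule.colon ((I ^ m) ^ (kk + 1)) (((I ^ m) ^ kk : Ideal R) : Set R) = I ^ m := by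
    intro kk
    have h1 : (I ^ m) ^ (kk + 1) = I ^ (m + m * kk) := by
      rw [← pow_mul]; congr 1; ring
    have h2 : (I ^ m) ^ kk = I ^ (m * kk) := by rw [← pow_mul]
    rw [h1, h2]
    exact hcolj m hm (m * kk)
  rw [ratliffRush]
  calc (⨆ kk : ℕ, Submodule.colon ((I ^ m) ^ (kk + 1)) (((I ^ m) ^ kk : Ideal R) : Set R))
      = ⨆ _ : ℕ, I ^ m := by exact iSup_congr hterm
    _ = I ^ m := iSup_const
end

section
/- If $I$ contains a non-zerodivisor, then $\widetilde{I^k} = I^k$ for all $k \geq 0$ if and only if the associated graded ring $\mathrm{gr}_I(R) = \bigoplus_{k \geq 0} I^k/I^{k+1}$ has positive depth (i.e., its irrelevant ideal contains a non-zerodivisor on $\mathrm{gr}_I(R)$). -/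
open Polynomial

/-- The irrelevant ideal of the Rees algebra `R(I)`, consisting of the elements of
positive degree. -/
def reesIrrelevant {R : Type*} [CommRing R] (I : Ideal R) : Ideal (reesAlgebra I) where
  carrier := {f | ((f : R[X])).coeff 0 = 0}
  add_mem' := by
    intro a b ha hb
    simp only [Set.mem_setOf_eq] at *
    rw [Subalgebra.coe_add, Polynomial.coeff_add, ha, hb, add_zero]
  zero_mem' := by simp
  smul_mem' := by
    intro c a ha
    simp only [Set.mem_setOf_eq, smul_eq_mul, Subalgebra.coe_mul, Polynomial.mul_coeff_zero] at *
    rw [ha, mul_zero]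

/-- The associated graded ring `gr_I(R) = R(I)/I·R(I)`. -/
abbrev assocGraded {R : Type*} [CommRing R] (I : Ideal R) :=
  reesAlgebra I ⧸ Ideal.map (algebraMap R (reesAlgebra I)) I



section ZDAux
variable {S : Type*} [CommRing S]

/-- The annihilator ideal of an element. -/
noncomputable def annOf (s : S) : Ideal S := (Submodule.span S {s}).annihilator

lemma mem_annOf {s y : S} : y ∈ annOf s ↔ y * s = 0 := by
  rw [annOf, Submodule.mem_annihilator_span_singleton, smul_eq_mul]

/-- The set of annihilators of nonzero elements. -/
def AnnSet (S : Type*) [CommRing S] : Set (Ideal S) :=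
  {P | ∃ s : S, s ≠ 0 ∧ P = annOf s}

/-- The maximal members of `AnnSet`. -/
def MaxAnn (S : Type*) [CommRing S] : Set (Ideal S) :=
  {P | P ∈ AnnSet S ∧ ∀ Q ∈ AnnSet S, P ≤ Q → Q = P}

lemma maxAnn_prime {P : Ideal S} (hP : P ∈ MaxAnn S) : P.IsPrime := by
  obtain ⟨⟨s, hs0, rfl⟩, hmax⟩ := hP
  refine ⟨?_, fun {a b} hab => ?_⟩
  · intro htop
    exact hs0 (by simpa [mem_annOf] using (htop ▸ Submodule.mem_top : (1 : S) ∈ annOf s))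
  · by_cases hb : b ∈ annOf s
    · exact Or.inr hb
    · left
      have hbs : b * s ≠ 0 := fun e => hb (mem_annOf.mpr e)
      have hle : annOf s ≤ annOf (b * s) := fun y hy => by
        rw [mem_annOf] at hy ⊢
        rw [show y * (b * s) = b * (y * s) by ring, hy, mul_zero]
      have heq := hmax (annOf (b * s)) ⟨b * s, hbs, rfl⟩ hle
      rw [← heq, mem_annOf, show a * (b * s) = a * b * s by ring, mem_annOf.mp hab]

variable [IsNoetherianRing S]

lemma exists_maxAnn_ge {t : S} (ht : t ≠ 0) : ∃ P ∈ MaxAnn S, annOf t ≤ P := by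
  have hN : IsNoetherian S S := inferInstance
  obtain ⟨P, ⟨hPA, hPge⟩, hPmax⟩ :=
    set_has_maximal_iff_noetherian.mpr hN {Q | Q ∈ AnnSet S ∧ annOf t ≤ Q}
      ⟨annOf t, ⟨t, ht, rfl⟩, le_rfl⟩
  refine ⟨P, ⟨hPA, fun Q hQ hle => ?_⟩, hPge⟩
  by_contra hne
  exact hPmax Q ⟨hQ, hPge.trans hle⟩ (lt_of_le_of_ne hle (fun e => hne e.symm))

lemma maxAnn_finite : (MaxAnn S).Finite := by
  rw [← Set.not_infinite]
  intro hinf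
  let f := hinf.natEmbedding
  have hsel : ∀ n : ℕ, ∃ s : S, s ≠ 0 ∧ (f n : Ideal S) = annOf s := fun n => (f n).2.1
  choose s hs0 hfs using hsel
  have hmono : Monotone (fun n => Submodule.span S (s '' Set.Iio n)) := by
    intro a b hab
    exact Submodule.span_mono (Set.image_mono (fun x hx => lt_of_lt_of_le hx hab))
  obtain ⟨n, hn⟩ := monotone_stabilizes_iff_noetherian.mpr inferInstance
    ⟨fun n => Submodule.span S (s '' Set.Iio n), hmono⟩
  have h1 : s n ∈ Submodule.span S (s '' Set.Iio (n + 1)) :=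
    Submodule.subset_span ⟨n, by simp, rfl⟩
  have h2 : s n ∉ Submodule.span S (s '' Set.Iio n) := by
    intro hmem
    have hinf_le : (Finset.range n).inf (fun i => (f i : Ideal S)) ≤ (f n : Ideal S) := by
      intro y hy
      rw [hfs n, mem_annOf]
      have hker : Submodule.span S (s '' Set.Iio n) ≤
          LinearMap.ker (LinearMap.mul S S y) := by
        rw [Submodule.span_le]
        rintro _ ⟨i, hi, rfl⟩
        have hle2 : (Finset.range n).inf (fun i => (f i : Ideal S)) ≤ (f i : Ideal S) :=
          Finset.inf_le (Finset.mem_range.mpr hi)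
        have hyi : y ∈ (f i : Ideal S) := hle2 hy
        rw [hfs i, mem_annOf] at hyi
        simpa [LinearMap.mem_ker] using hyi
      simpa using hker hmem
    obtain ⟨i, hi, hle⟩ := ((maxAnn_prime (f n).2).inf_le').mp hinf_le
    have heq : (f n : Ideal S) = (f i : Ideal S) :=
      (f i).2.2 (f n : Ideal S) (f n).2.1 hle
    have : f n = f i := Subtype.ext heq
    have : n = i := f.injective this
    rw [Finset.mem_range] at hi
    omega
  have he : Submodule.span S (s '' Set.Iio n) = Submodule.span S (s '' Set.Iio (n + 1)) :=
    hn (n + 1) (Nat.le_succ n)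
  rw [he] at h2
  exact h2 h1
end ZDAux

section ZDAux2
variable {S : Type*} [CommRing S] [IsNoetherianRing S]

lemma exists_ann_of_zd (J : Ideal S) (hJ : ∀ y ∈ J, y ∉ nonZeroDivisors S) :
    ∃ s : S, s ≠ 0 ∧ ∀ y ∈ J, y * s = 0 := by
  classical
  have hfin := maxAnn_finite (S := S)
  have hcover : (J : Set S) ⊆ ⋃ P ∈ (↑hfin.toFinset : Set (Ideal S)), (P : Set S) := by
    intro y hy
    obtain ⟨t, ht, ht0⟩ : ∃ t, t * y = 0 ∧ t ≠ 0 := by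
      have hy' := hJ y hy
      rw [mem_nonZeroDivisors_iff_right] at hy'
      push_neg at hy'
      exact hy'
    obtain ⟨P, hP, hle⟩ := exists_maxAnn_ge ht0
    exact Set.mem_biUnion (by simpa using hP)
      (hle (mem_annOf.mpr (by rw [mul_comm]; exact ht)))
  obtain ⟨P, hPF, hJP⟩ := (Ideal.subset_union_prime (f := fun P : Ideal S => P) ⊥ ⊥
    (fun P hP _ _ => maxAnn_prime (by simpa using hP))).mp hcover
  have hPM : P ∈ MaxAnn S := by simpa using hPF
  obtain ⟨⟨t, ht0, rfl⟩, -⟩ := hPM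
  exact ⟨t, ht0, fun y hy => mem_annOf.mp (hJP hy)⟩

end ZDAux2

section ReesAux
variable {R : Type*} [CommRing R] (I : Ideal R)

lemma IA_monomial_mem {n : ℕ} {r : R} (hr : r ∈ I ^ (n + 1)) :
    ∀ hA : (monomial n r : R[X]) ∈ reesAlgebra I,
      (⟨monomial n r, hA⟩ : reesAlgebra I) ∈ Ideal.map (algebraMap R (reesAlgebra I)) I := by
  have hr' : r ∈ I ^ n * I := by rwa [← pow_succ]
  refine Submodule.mul_induction_on'
    (C := fun r _ => ∀ hA : (monomial n r : R[X]) ∈ reesAlgebra I,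
      (⟨monomial n r, hA⟩ : reesAlgebra I) ∈ Ideal.map (algebraMap R (reesAlgebra I)) I)
    ?_ ?_ hr'
  · intro y hy x hx hA
    have heq : (⟨monomial n (y * x), hA⟩ : reesAlgebra I) =
        algebraMap R (reesAlgebra I) x * ⟨monomial n y, reesAlgebra.monomial_mem.mpr hy⟩ := by
      apply Subtype.ext
      push_cast
      rw [Polynomial.algebraMap_eq, C_mul_monomial, mul_comm x y]
    rw [heq]
    exact Ideal.mul_mem_right _ _ (Ideal.mem_map_of_mem _ hx)
  · intro x hx y hy ihx ihy hA
    have hxA : (monomial n x : R[X]) ∈ reesAlgebra I :=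
      reesAlgebra.monomial_mem.mpr (Ideal.pow_le_pow_right n.le_succ (by rwa [pow_succ]))
    have hyA : (monomial n y : R[X]) ∈ reesAlgebra I :=
      reesAlgebra.monomial_mem.mpr (Ideal.pow_le_pow_right n.le_succ (by rwa [pow_succ]))
    have heq : (⟨monomial n (x + y), hA⟩ : reesAlgebra I) =
        ⟨monomial n x, hxA⟩ + ⟨monomial n y, hyA⟩ := by
      apply Subtype.ext
      push_cast
      rw [map_add]
    rw [heq]
    exact Ideal.add_mem _ (ihx hxA) (ihy hyA)

lemma mem_IA_iff (g : reesAlgebra I) :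
    g ∈ Ideal.map (algebraMap R (reesAlgebra I)) I ↔
      ∀ n : ℕ, (g : R[X]).coeff n ∈ I ^ (n + 1) := by
  constructor
  · intro hg
    refine Submodule.span_induction
      (p := fun g _ => ∀ n : ℕ, ((g : reesAlgebra I) : R[X]).coeff n ∈ I ^ (n + 1))
      ?_ ?_ ?_ ?_ hg
    · rintro x ⟨x', hx', rfl⟩ n
      have : ((algebraMap R (reesAlgebra I) x' : reesAlgebra I) : R[X]) = C x' := rfl
      rw [this, coeff_C]
      split
      · rename_i hn0; subst hn0; simpa using hx'
      · exact zero_mem _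
    · intro n; simp
    · intro x y _ _ ihx ihy n
      push_cast
      rw [coeff_add]
      exact add_mem (ihx n) (ihy n)
    · intro a x _ ih n
      rw [smul_eq_mul]
      show ((a : R[X]) * (x : R[X])).coeff n ∈ I ^ (n + 1)
      rw [coeff_mul]
      refine Ideal.sum_mem _ ?_
      rintro ⟨i, j⟩ hij
      rw [Finset.HasAntidiagonal.mem_antidiagonal] at hij
      have h1 : (a : R[X]).coeff i ∈ I ^ i := a.2 i
      have h2 : (x : R[X]).coeff j ∈ I ^ (j + 1) := ih j
      have h3 := Ideal.mul_mem_mul h1 h2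
      rw [← pow_add] at h3
      have : i + (j + 1) = n + 1 := by omega
      rwa [this] at h3
  · intro hg
    have heq : g = ∑ n ∈ (g : R[X]).support,
        (⟨monomial n ((g : R[X]).coeff n),
          reesAlgebra.monomial_mem.mpr (g.2 n)⟩ : reesAlgebra I) := by
      apply Subtype.ext
      push_cast
      exact (g : R[X]).as_sum_support
    rw [heq]
    exact Ideal.sum_mem _ fun n _ => IA_monomial_mem I (hg n) _

end ReesAux

set_option maxHeartbeats 1000000
set_option synthInstance.maxHeartbeats 400000

/-- If `I` contains a non-zerodivisor, then all powers of `I` are Ratliff-Rush closed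
if and only if the associated graded ring `gr_I(R)` has positive depth, i.e. its
irrelevant ideal contains a non-zerodivisor on `gr_I(R)`. -/
theorem ratliffRush_pow_eq_iff_depth_assocGraded_pos {R : Type*} [CommRing R]
    [IsNoetherianRing R] [IsLocalRing R] (I : Ideal R)
    (h : ∃ x ∈ I, x ∈ nonZeroDivisors R) :
    (∀ k : ℕ, ratliffRush (I ^ k) = I ^ k) ↔
      ∃ y ∈ Ideal.map (Ideal.Quotient.mk (Ideal.map (algebraMap R (reesAlgebra I)) I))
          (reesIrrelevant I),
        y ∈ nonZeroDivisors (assocGraded I) := by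
  classical
  constructor
  · -- all powers Ratliff-Rush closed → positive depth
    intro hRR
    by_contra hno
    push_neg at hno
    obtain ⟨sbar, hs0, hskill⟩ := exists_ann_of_zd (S := assocGraded I) _ hno
    obtain ⟨g, rfl⟩ := Ideal.Quotient.mk_surjective sbar
    have hgIA : g ∉ Ideal.map (algebraMap R (reesAlgebra I)) I :=
      fun hg => hs0 (Ideal.Quotient.eq_zero_iff_mem.mpr hg)
    refine hgIA ((mem_IA_iff I g).mpr fun n => ?_)
    have hc : ∀ x ∈ I, x * (g : R[X]).coeff n ∈ I ^ (n + 2) := by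
      intro x hx
      have hxA : (monomial 1 x : R[X]) ∈ reesAlgebra I :=
        reesAlgebra.monomial_mem.mpr (by rwa [pow_one])
      have hirr : (⟨monomial 1 x, hxA⟩ : reesAlgebra I) ∈ reesIrrelevant I := by
        show (monomial 1 x : R[X]).coeff 0 = 0
        simp [coeff_monomial]
      have h0 := hskill _ (Ideal.mem_map_of_mem _ hirr)
      rw [← map_mul, Ideal.Quotient.eq_zero_iff_mem] at h0
      have h1 := (mem_IA_iff I _).mp h0 (n + 1)
      have hco : (((⟨monomial 1 x, hxA⟩ : reesAlgebra I) * g : reesAlgebra I) : R[X]).coeff (n + 1)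
          = x * (g : R[X]).coeff n := by
        push_cast
        rw [coeff_monomial_mul]
      rwa [hco] at h1
    have hmul : ∀ m : ℕ, ∀ q ∈ I ^ (m + 1), (g : R[X]).coeff n * q ∈ I ^ (n + 2 + m) := by
      intro m
      induction m with
      | zero =>
        intro q hq
        rw [pow_one] at hq
        simpa [mul_comm] using hc q hq
      | succ m ih =>
        intro q hq
        rw [pow_succ] at hq
        refine Submodule.mul_induction_on hq (fun u hu v hv => ?_) (fun p q hp hq => ?_)
        · have h2 := Ideal.mul_mem_mul (ih u hu) hv
          rw [← pow_succ] at h2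
          rwa [mul_assoc] at h2
        · simpa [mul_add] using add_mem hp hq
    have hcol : (g : R[X]).coeff n ∈ ratliffRush (I ^ (n + 1)) := by
      rw [ratliffRush]
      refine le_iSup (fun m => Submodule.colon ((I ^ (n + 1)) ^ (m + 1)) (((I ^ (n + 1)) ^ m : Ideal R) : Set R)) 1 ?_
      rw [Submodule.mem_colon]
      intro p hp
      rw [pow_one] at hp
      have := hmul n p hp
      rw [smul_eq_mul, show (1 : ℕ) + 1 = 2 by rfl, ← pow_mul]
      rwa [show (n + 1) * 2 = n + 2 + n by ring]
    rwa [hRR (n + 1)] at hcol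
  · -- positive depth → all powers Ratliff-Rush closed
    rintro ⟨y, hyJ, hyreg⟩ k
    obtain ⟨f, hfirr, rfl⟩ :=
      (Ideal.mem_map_iff_of_surjective _ Ideal.Quotient.mk_surjective).mp hyJ
    refine le_antisymm ?_ ?_
    · intro a ha
      rcases Nat.eq_zero_or_pos k with rfl | hk
      · simpa using Submodule.mem_top
      have hdir : Monotone (fun m => Submodule.colon ((I ^ k) ^ (m + 1)) (((I ^ k) ^ m : Ideal R) : Set R)) := by
        apply monotone_nat_of_le_succ
        intro m c hc
        rw [Submodule.mem_colon] at hc ⊢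
        intro p hp
        rw [pow_succ] at hp
        refine Submodule.mul_induction_on hp (fun u hu v hv => ?_) (fun p q hp hq => ?_)
        · have h2 := Ideal.mul_mem_mul (hc u hu) hv
          rw [← pow_succ] at h2
          rw [smul_eq_mul, mul_assoc] at h2
          rw [smul_eq_mul]
          exact h2
        · simpa [smul_eq_mul, mul_add] using add_mem hp hq
      rw [ratliffRush] at ha
      obtain ⟨m, hm⟩ := (Submodule.mem_iSup_of_directed _ hdir.directed_le).mp ha
      rw [Submodule.mem_colon] at hm
      by_contra hak
      set P : ℕ → Prop := fun j => a ∈ I ^ j with hPdef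
      have hP0 : P 0 := by simpa [hPdef] using Submodule.mem_top
      set j := Nat.findGreatest P k with hjdef
      have hPj : a ∈ I ^ j := Nat.findGreatest_spec (Nat.zero_le k) hP0
      have hjk : j < k := lt_of_le_of_ne (Nat.findGreatest_le k) (fun e => hak (by rw [← e]; exact hPj))
      have hPj1 : a ∉ I ^ (j + 1) :=
        Nat.findGreatest_is_greatest (Nat.lt_succ_self j) hjk
      have hgA : (monomial j a : R[X]) ∈ reesAlgebra I := reesAlgebra.monomial_mem.mpr hPj
      set s := k * m + 1 with hsdef
      have hXdvd : (X : R[X]) ^ s ∣ (f : R[X]) ^ s :=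
        pow_dvd_pow_of_dvd (X_dvd_iff.mpr hfirr) s
      have hfs : f ^ s * ⟨monomial j a, hgA⟩ ∈ Ideal.map (algebraMap R (reesAlgebra I)) I := by
        rw [mem_IA_iff]
        intro n
        have hco : ((f ^ s * (⟨monomial j a, hgA⟩ : reesAlgebra I) : reesAlgebra I) : R[X])
            = ((f : R[X]) ^ s * C a) * X ^ j := by
          push_cast
          rw [mul_assoc, C_mul_X_pow_eq_monomial]
        rw [hco, coeff_mul_X_pow']
        split
        · rename_i hjn
          rw [coeff_mul_C]
          rcases Nat.lt_or_ge (n - j) s with hlt | hge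
          · rw [X_pow_dvd_iff.mp hXdvd _ hlt, zero_mul]
            exact zero_mem _
          · rw [hsdef] at hge
            have hkm : k * (m + 1) = k * m + k := by ring
            have hcoefmem : ((f : R[X]) ^ s).coeff (n - j) ∈ I ^ (n - j) := by
              have : (f : R[X]) ^ s = ((f ^ s : reesAlgebra I) : R[X]) := by push_cast; ring
              rw [this]
              exact (f ^ s : reesAlgebra I).2 (n - j)
            have hsplit : I ^ (n - j) = (I ^ k) ^ m * I ^ (n - j - k * m) := by
              rw [← pow_mul, ← pow_add]
              congr 1
              omega
            rw [hsplit] at hcoefmem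
            refine Submodule.mul_induction_on hcoefmem (fun u hu v hv => ?_) (fun p q hp hq => ?_)
            · have hau : a * u ∈ (I ^ k) ^ (m + 1) := by
                have := hm u hu
                rwa [smul_eq_mul] at this
              have h3 : (a * u) * v ∈ (I ^ k) ^ (m + 1) * I ^ (n - j - k * m) :=
                Ideal.mul_mem_mul hau hv
              rw [← pow_mul, ← pow_add] at h3
              have h4 : I ^ (k * (m + 1) + (n - j - k * m)) ≤ I ^ (n + 1) :=
                Ideal.pow_le_pow_right (by rw [hkm]; omega)
              have h5 := h4 h3
              rwa [show u * v * a = a * u * v by ring]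
            · simpa [add_mul] using add_mem hp hq
        · exact zero_mem _
      have h0 : (Ideal.Quotient.mk (Ideal.map (algebraMap R (reesAlgebra I)) I))
          (f ^ s * ⟨monomial j a, hgA⟩) = 0 := Ideal.Quotient.eq_zero_iff_mem.mpr hfs
      rw [map_mul, map_pow] at h0
      have hzero : (Ideal.Quotient.mk (Ideal.map (algebraMap R (reesAlgebra I)) I))
          (⟨monomial j a, hgA⟩ : reesAlgebra I) = 0 := by
        refine (mem_nonZeroDivisors_iff_right (M₀ := assocGraded I)).mp (pow_mem hyreg s) _ ?_
        refine (mul_comm (G := assocGraded I) _ _).trans ?_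
        exact h0
      have hmem := (mem_IA_iff I _).mp (Ideal.Quotient.eq_zero_iff_mem.mp hzero) j
      have hmem2 : a ∈ I ^ (j + 1) := by simpa [coeff_monomial] using hmem
      exact hPj1 hmem2
    · rw [ratliffRush]
      refine le_trans ?_ (le_iSup (fun m => Submodule.colon ((I ^ k) ^ (m + 1)) (((I ^ k) ^ m : Ideal R) : Set R)) 0)
      intro a ha
      rw [Submodule.mem_colon]
      intro p hp
      rw [pow_zero, Ideal.one_eq_top] at hp
      rw [pow_one, smul_eq_mul]
      exact Ideal.mul_mem_right p _ ha
end

section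
/- If $R$ is a standard graded algebra over an infinite field $K$ with graded maximal ideal $\mathfrak{m}$ and $I$ a homogeneous ideal, then $I\mathfrak{m}^{k+1} : \mathfrak{m} \subseteq \mathfrak{m}^k$ for all $k \geq 0$. -/
open MvPolynomial

set_option synthInstance.maxHeartbeats 1000000
attribute [local instance] MvPolynomial.gradedAlgebra

section Aux

variable {K : Type*} [Field K] {n : ℕ}

private lemma degAdd (u v : Fin n →₀ ℕ) :
    Finsupp.degree (u + v) = Finsupp.degree u + Finsupp.degree v := by
  rw [Finsupp.degree_eq_weight_one]
  exact map_add _ u v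

private def lowDeg (K : Type*) [Field K] (n m : ℕ) : Ideal (MvPolynomial (Fin n) K) where
  carrier := {p | ∀ d : Fin n →₀ ℕ, Finsupp.degree d < m → coeff d p = 0}
  zero_mem' := fun d _ => rfl
  add_mem' := fun {a b} ha hb d hd => by rw [coeff_add, ha d hd, hb d hd, add_zero]
  smul_mem' := fun c p hp d hd => by
    rw [smul_eq_mul, coeff_mul]
    refine Finset.sum_eq_zero fun x hx => ?_
    have h1 : x.1 + x.2 = d := Finset.HasAntidiagonal.mem_antidiagonal.mp hx
    have h2 : Finsupp.degree x.1 + Finsupp.degree x.2 = Finsupp.degree d := by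
      rw [← degAdd, h1]
    rw [hp x.2 (by omega), mul_zero]

private lemma mem_lowDeg_mul {a b : ℕ} {p q : MvPolynomial (Fin n) K}
    (hp : p ∈ lowDeg K n a) (hq : q ∈ lowDeg K n b) : p * q ∈ lowDeg K n (a + b) := by
  intro d hd
  rw [coeff_mul]
  refine Finset.sum_eq_zero fun x hx => ?_
  have h1 : x.1 + x.2 = d := Finset.HasAntidiagonal.mem_antidiagonal.mp hx
  have h2 : Finsupp.degree x.1 + Finsupp.degree x.2 = Finsupp.degree d := by
    rw [← degAdd, h1]
  by_cases hda : Finsupp.degree x.1 < a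
  · rw [hp x.1 hda, zero_mul]
  · rw [hq x.2 (by omega), mul_zero]

private lemma spanX_le_lowDeg_one :
    Ideal.span (Set.range (X : Fin n → MvPolynomial (Fin n) K)) ≤ lowDeg K n 1 := by
  rw [Ideal.span_le]
  rintro _ ⟨i, rfl⟩ d hd
  have : d = 0 := by
    rw [← Finsupp.degree_eq_zero_iff]; omega
  rw [this]
  exact coeff_zero_X i

private lemma pow_le_lowDeg (m : ℕ) :
    Ideal.span (Set.range (X : Fin n → MvPolynomial (Fin n) K)) ^ m ≤ lowDeg K n m := by
  induction m with
  | zero => exact fun p _ d hd => absurd hd (Nat.not_lt_zero _)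
  | succ m ih =>
    rw [pow_succ]
    exact Ideal.mul_le.mpr fun r hr s hs =>
      mem_lowDeg_mul (ih hr) (spanX_le_lowDeg_one hs)

private lemma monomial_mem_pow (m : ℕ) :
    ∀ (s : Fin n →₀ ℕ) (c : K), m ≤ Finsupp.degree s →
      (monomial s c : MvPolynomial (Fin n) K) ∈
        Ideal.span (Set.range (X : Fin n → MvPolynomial (Fin n) K)) ^ m := by
  induction m with
  | zero => intro s c _; simp
  | succ m ih =>
    intro s c hs
    have hs0 : s ≠ 0 := by
      intro h
      rw [h, map_zero] at hs; omega
    obtain ⟨i, hi⟩ : ∃ i, s i ≠ 0 := by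
      by_contra h
      push_neg at h
      exact hs0 (Finsupp.ext fun j => h j)
    have hsum : (s - Finsupp.single i 1) + Finsupp.single i 1 = s := by
      ext j
      rcases eq_or_ne i j with rfl | hne
      · simp only [Finsupp.add_apply, Finsupp.coe_tsub, Pi.sub_apply, Finsupp.single_eq_same]
        omega
      · simp [Finsupp.add_apply, Finsupp.coe_tsub, Finsupp.single_eq_of_ne' hne]
    have hdeg1 : Finsupp.degree (Finsupp.single i (1 : ℕ)) = 1 := by
      exact Finsupp.degree_single i 1
    have hdeg : m ≤ Finsupp.degree (s - Finsupp.single i 1) := by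
      have := degAdd (s - Finsupp.single i 1) (Finsupp.single i 1)
      rw [hsum, hdeg1] at this
      omega
    have hmono : (monomial s c : MvPolynomial (Fin n) K)
        = monomial (s - Finsupp.single i 1) c * X i := by
      rw [X, monomial_mul, hsum, mul_one]
    rw [hmono, pow_succ]
    exact Ideal.mul_mem_mul (ih _ c hdeg) (Ideal.subset_span ⟨i, rfl⟩)

private lemma isHomogeneous_mem_pow {p : MvPolynomial (Fin n) K} {d m : ℕ}
    (hp : p.IsHomogeneous d) (hm : m ≤ d) :
    p ∈ Ideal.span (Set.range (X : Fin n → MvPolynomial (Fin n) K)) ^ m := by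
  rw [p.as_sum]
  refine Ideal.sum_mem _ fun s hs => monomial_mem_pow m s _ ?_
  have hcs : coeff s p ≠ 0 := mem_support_iff.mp hs
  have := hp hcs
  rw [Finsupp.degree_eq_weight_one]
  exact le_of_le_of_eq hm this.symm

private lemma homogeneousComponent_mul_X (φ : MvPolynomial (Fin n) K) (i : Fin n) (d : ℕ) :
    homogeneousComponent (d + 1) (φ * X i) = homogeneousComponent d φ * X i := by
  classical
  ext e
  rw [coeff_homogeneousComponent, coeff_mul_X', coeff_mul_X', coeff_homogeneousComponent]
  by_cases hie : i ∈ e.support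
  · have hei : e i ≠ 0 := Finsupp.mem_support_iff.mp hie
    have hsum : (e - Finsupp.single i 1) + Finsupp.single i 1 = e := by
      ext j
      rcases eq_or_ne i j with rfl | hne
      · simp only [Finsupp.add_apply, Finsupp.coe_tsub, Pi.sub_apply, Finsupp.single_eq_same]
        omega
      · simp [Finsupp.add_apply, Finsupp.coe_tsub, Finsupp.single_eq_of_ne' hne]
    have hdeg1 : Finsupp.degree (Finsupp.single i (1 : ℕ)) = 1 := by
      exact Finsupp.degree_single i 1
    have hdd : Finsupp.degree (e - Finsupp.single i 1) + 1 = Finsupp.degree e := by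
      have := degAdd (e - Finsupp.single i 1) (Finsupp.single i 1)
      rw [hsum, hdeg1] at this
      omega
    rw [if_pos hie, if_pos hie]
    by_cases h : Finsupp.degree e = d + 1
    · rw [if_pos h, if_pos (by omega)]
    · rw [if_neg h, if_neg (by omega)]
  · rw [if_neg hie, if_neg hie, ite_self]

end Aux

set_option maxHeartbeats 1000000 in
/-- In a standard graded algebra `R = K[x₁,…,xₙ]/J` over an infinite field `K` with graded
maximal ideal `𝔪` and `I` a homogeneous ideal, `I𝔪^(k+1) : 𝔪 ⊆ 𝔪^k` for all `k ≥ 0`. -/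
theorem colon_le_pow_graded {K : Type*} [Field K] [Infinite K] {n : ℕ}
    (J : Ideal (MvPolynomial (Fin n) K))
    (hJ : J.IsHomogeneous (homogeneousSubmodule (Fin n) K))
    (I₀ : Ideal (MvPolynomial (Fin n) K))
    (hI₀ : I₀.IsHomogeneous (homogeneousSubmodule (Fin n) K))
    (hdepth : ∃ x ∈ Ideal.map (Ideal.Quotient.mk J)
        (Ideal.span (Set.range (X : Fin n → MvPolynomial (Fin n) K))),
      x ∈ nonZeroDivisors (MvPolynomial (Fin n) K ⧸ J)) :
    ∀ k : ℕ,
      Submodule.colon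
          (Ideal.map (Ideal.Quotient.mk J) I₀ *
            Ideal.map (Ideal.Quotient.mk J)
              (Ideal.span (Set.range (X : Fin n → MvPolynomial (Fin n) K))) ^ (k + 1))
          (Ideal.map (Ideal.Quotient.mk J)
            (Ideal.span (Set.range (X : Fin n → MvPolynomial (Fin n) K)))) ≤
        Ideal.map (Ideal.Quotient.mk J)
            (Ideal.span (Set.range (X : Fin n → MvPolynomial (Fin n) K))) ^ k := by
  classical
  intro k x hx
  obtain ⟨z, hz𝔪, hz⟩ := hdepth
  set 𝔪S : Ideal (MvPolynomial (Fin n) K) := Ideal.span (Set.range X) with h𝔪S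
  obtain ⟨p, rfl⟩ := Ideal.Quotient.mk_surjective x
  rw [← Ideal.map_pow, Ideal.mem_quotient_iff_mem_sup]
  -- the key fact coming from the colon membership
  have h1 : ∀ i : Fin n, p * X i ∈ 𝔪S ^ (k + 1) ⊔ J := by
    intro i
    have hXmem : Ideal.Quotient.mk J (X i) ∈ Ideal.map (Ideal.Quotient.mk J) 𝔪S :=
      Ideal.mem_map_of_mem _ (Ideal.subset_span ⟨i, rfl⟩)
    have h2 : Ideal.Quotient.mk J p * Ideal.Quotient.mk J (X i) ∈ _ :=
      Submodule.mem_colon.mp hx _ hXmem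
    have h3 : Ideal.Quotient.mk J p * Ideal.Quotient.mk J (X i) ∈
        Ideal.map (Ideal.Quotient.mk J) 𝔪S ^ (k + 1) :=
      Ideal.mul_le_right h2
    rw [← Ideal.map_pow] at h3
    rw [← Ideal.mem_quotient_iff_mem_sup, map_mul]
    exact h3
  -- homogeneity facts
  have h𝔪hom : 𝔪S.IsHomogeneous (homogeneousSubmodule (Fin n) K) := by
    refine Ideal.homogeneous_span _ _ ?_
    rintro _ ⟨i, rfl⟩
    exact ⟨1, (mem_homogeneousSubmodule _ _).mpr (isHomogeneous_X _ i)⟩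
  have hpowhom : ∀ m : ℕ, (𝔪S ^ m).IsHomogeneous (homogeneousSubmodule (Fin n) K) := by
    intro m
    induction m with
    | zero =>
      rw [pow_zero, Ideal.one_eq_top]
      exact fun i r _ => trivial
    | succ m ih =>
      rw [pow_succ]
      exact Ideal.IsHomogeneous.mul ih h𝔪hom
  -- each homogeneous component of p lies in 𝔪S ^ k ⊔ J
  have hcomp : ∀ d : ℕ, homogeneousComponent d p ∈ 𝔪S ^ k ⊔ J := by
    intro d
    by_cases hdk : k ≤ d
    · exact Ideal.mem_sup_left
        (isHomogeneous_mem_pow (homogeneousComponent_isHomogeneous d p) hdk)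
    ·
      refine Ideal.mem_sup_right ?_
      set q : MvPolynomial (Fin n) K := homogeneousComponent d p with hqdef
      -- q * X i ∈ J for all i
      have hqX : ∀ i : Fin n, q * X i ∈ J := by
        intro i
        obtain ⟨a, ha, b, hb, hab⟩ := Submodule.mem_sup.mp (h1 i)
        have hcompEq : homogeneousComponent (d + 1) (p * X i) = q * X i :=
          homogeneousComponent_mul_X p i d
        have hdecomp : ∀ r : MvPolynomial (Fin n) K, ∀ m : ℕ,
            (DirectSum.decompose (homogeneousSubmodule (Fin n) K) r m :
              MvPolynomial (Fin n) K) = homogeneousComponent m r :=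
          fun r m => decomposition.decompose'_apply r m
        have hbJ : homogeneousComponent (d + 1) b ∈ J := by
          have := hJ (d + 1) hb
          rwa [hdecomp] at this
        have haM : homogeneousComponent (d + 1) a ∈ 𝔪S ^ (k + 1) := by
          have := hpowhom (k + 1) (d + 1) ha
          rwa [hdecomp] at this
        have haz : homogeneousComponent (d + 1) a = 0 := by
          have hlow := pow_le_lowDeg (K := K) (n := n) (k + 1) haM
          have hhom := homogeneousComponent_isHomogeneous (d + 1) a
          ext e
          rw [coeff_zero]
          by_cases hce : coeff e (homogeneousComponent (d + 1) a) = 0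
          · exact hce
          · have hdeg := hhom hce
            refine hlow e ?_
            rw [Finsupp.degree_eq_weight_one]
            change Finsupp.weight 1 e < k + 1
            rw [hdeg]
            omega
        have : q * X i = homogeneousComponent (d + 1) b := by
          rw [← hcompEq, ← hab, map_add, haz, zero_add]
        rw [this]
        exact hbJ
      -- hence mk q * m = 0 for all m ∈ 𝔪, in particular for the regular element z
      have hq0 : Ideal.Quotient.mk J q = 0 := by
        have hqz : Ideal.Quotient.mk J q * z = 0 := by
          rw [h𝔪S, Ideal.map_span] at hz𝔪
          refine Submodule.span_induction ?_ ?_ ?_ ?_ hz𝔪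
          · rintro _ ⟨_, ⟨i, rfl⟩, rfl⟩
            rw [← map_mul, Ideal.Quotient.eq_zero_iff_mem]
            exact hqX i
          · rw [mul_zero]
          · intro y₁ y₂ _ _ h₁ h₂
            rw [mul_add, h₁, h₂, add_zero]
          · intro c y _ h
            rw [smul_eq_mul, mul_comm c y, ← mul_assoc, h, zero_mul]
        exact mem_nonZeroDivisors_iff_right.mp hz _ hqz
      rwa [Ideal.Quotient.eq_zero_iff_mem] at hq0
  -- assemble
  rw [← sum_homogeneousComponent p]
  exact Ideal.sum_mem _ fun i _ => hcomp i
end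

section
/- Let $(R, \mathfrak{m})$ be a Noetherian local ring with $\mathrm{depth}\,R > 0$ and let $Q$ be a parameter ideal (generated by a system of parameters). If $Q$ is $\mathfrak{m}$-full, i.e., $Q\mathfrak{m} : x = Q$ for some $x \in \mathfrak{m} \setminus \mathfrak{m}^2$, then $R$ is regular. -/
open IsLocalRing

/-- A Noetherian local ring is regular if its maximal ideal can be generated by
`dim R` elements. -/
def IsRegularLocal (R : Type*) [CommRing R] [IsLocalRing R] : Prop :=
  ∃ (k : ℕ) (f : Fin k → R), Ideal.span (Set.range f) = maximalIdeal R ∧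
    (k : WithBot (WithTop ℕ)) = ringKrullDim R

/-- `Q` is a parameter ideal: it is generated by `dim R` elements and is an ideal of
definition, i.e. its radical is the maximal ideal. -/
def IsParameterIdeal {R : Type*} [CommRing R] [IsLocalRing R] (Q : Ideal R) : Prop :=
  (∃ (k : ℕ) (f : Fin k → R), Q = Ideal.span (Set.range f) ∧
    (k : WithBot (WithTop ℕ)) = ringKrullDim R) ∧ Q.radical = maximalIdeal R

namespace MFullAux

variable {R : Type*} [CommRing R]

/-- A bound on chain lengths in the interval `[A, B]` of ideals, witnessed by a monotone
rank function which is strictly monotone on the interval. -/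
def Bnd (A B : Ideal R) (n : ℕ) : Prop :=
  ∃ ρ : Ideal R → ℕ, Monotone ρ ∧ (∀ X Y : Ideal R, A ≤ X → X < Y → Y ≤ B → ρ X < ρ Y) ∧
    ρ B ≤ ρ A + n

/-- There is a strictly increasing chain of ideals from `A` to `B` of length `n`. -/
def FullChainI (A B : Ideal R) (n : ℕ) : Prop :=
  ∃ c : LTSeries (Ideal R), c.head = A ∧ c.last = B ∧ c.length = n

lemma bnd_refl (A : Ideal R) : Bnd A A 0 :=
  ⟨fun _ => 0, monotone_const, fun _ _ hAX hXY hYA => absurd ((hAX.trans_lt hXY).trans_le hYA)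
    (lt_irrefl A), le_rfl⟩

private lemma modular_eq {X Y N : Ideal R} (hXY : X ≤ Y) (hinf : X ⊓ N = Y ⊓ N)
    (hsup : X ⊔ N = Y ⊔ N) : X = Y := by
  have h1 : X ⊔ N ⊓ Y = (X ⊔ N) ⊓ Y := (sup_inf_assoc_of_le N hXY).symm
  have h2 : (X ⊔ N) ⊓ Y = Y := by
    rw [hsup]; exact inf_eq_right.2 le_sup_left
  have h3 : X ⊔ N ⊓ Y = X := by
    rw [inf_comm, ← hinf]; exact sup_eq_left.2 inf_le_left
  rw [h3, h2] at h1; exact h1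

lemma bnd_comp {A B C : Ideal R} {a b : ℕ} (hAB : A ≤ B) (hBC : B ≤ C)
    (h1 : Bnd A B a) (h2 : Bnd B C b) : Bnd A C (a + b) := by
  obtain ⟨ρ₁, hm₁, hs₁, hb₁⟩ := h1
  obtain ⟨ρ₂, hm₂, hs₂, hb₂⟩ := h2
  refine ⟨fun X => ρ₁ (X ⊓ B) + ρ₂ (X ⊔ B), fun X Y hXY => by
      exact add_le_add (hm₁ (inf_le_inf_right B hXY)) (hm₂ (sup_le_sup_right hXY B)), ?_, ?_⟩
  · intro X Y hAX hXY hYC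
    rcases eq_or_lt_of_le (inf_le_inf_right B hXY.le : X ⊓ B ≤ Y ⊓ B) with heq | hlt
    · rcases eq_or_lt_of_le (sup_le_sup_right hXY.le B : X ⊔ B ≤ Y ⊔ B) with heq2 | hlt2
      · exact absurd (modular_eq hXY.le heq heq2) hXY.ne
      · exact add_lt_add_of_le_of_lt (hm₁ (inf_le_inf_right B hXY.le))
          (hs₂ _ _ le_sup_right hlt2 (sup_le hYC hBC))
    · exact add_lt_add_of_lt_of_le
        (hs₁ _ _ (le_inf hAX hAB) hlt inf_le_right)
        (hm₂ (sup_le_sup_right hXY.le B))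
  · have e1 : C ⊓ B = B := inf_eq_right.2 hBC
    have e2 : C ⊔ B = C := sup_eq_left.2 hBC
    have e3 : A ⊓ B = A := inf_eq_left.2 hAB
    have e4 : A ⊔ B = B := sup_eq_right.2 hAB
    simp only [e1, e2, e3, e4]
    omega

lemma chain_le_bnd {A B : Ideal R} {n : ℕ} (h : Bnd A B n) (c : LTSeries (Ideal R))
    (hh : A ≤ c.head) (hl : c.last ≤ B) : c.length ≤ n := by
  obtain ⟨ρ, hm, hs, hb⟩ := h
  have key : ∀ i : Fin (c.length + 1), ρ c.head + (i : ℕ) ≤ ρ (c i) := by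
    intro i
    induction i using Fin.induction with
    | zero => simp only [Fin.val_zero, Nat.add_zero]; exact le_of_eq rfl
    | succ j ih =>
      have hstep : ρ (c j.castSucc) < ρ (c j.succ) := by
        refine hs _ _ (hh.trans (c.monotone ?_)) (c.step j) ((c.monotone ?_).trans hl)
        · exact Fin.zero_le _
        · exact Fin.le_last _
      have := ih
      simp only [Fin.coe_castSucc] at this
      have : ρ c.head + (j : ℕ) + 1 ≤ ρ (c j.succ) := Nat.add_one_le_iff.2 (this.trans_lt hstep)
      simpa [Nat.add_assoc] using this
  have := key (Fin.last _)
  simp only [Fin.val_last] at this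
  have hlast : ρ (c.last) ≤ ρ B := hm hl
  have hhead : ρ A ≤ ρ c.head := hm hh
  have : ρ c.head + c.length ≤ ρ B := le_trans this hlast
  omega

lemma fullChainI_singleton (A : Ideal R) : FullChainI A A 0 :=
  ⟨RelSeries.singleton _ A, rfl, rfl, rfl⟩

lemma fullChainI_snoc {A B C : Ideal R} {n : ℕ} (h : FullChainI A B n) (hBC : B < C) :
    FullChainI A C (n + 1) := by
  obtain ⟨c, hh, hl, hlen⟩ := h
  exact ⟨c.snoc C (hl ▸ hBC), by simp [hh], by simp, by simp [hlen]⟩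

lemma fullChainI_pair {A B : Ideal R} (h : A < B) : FullChainI A B 1 :=
  fullChainI_snoc (fullChainI_singleton A) h

lemma fullChainI_trans {A B B' C : Ideal R} {p q : ℕ} (h1 : FullChainI A B p)
    (h2 : FullChainI B' C q) (hBB : B ≤ B') : ∃ t, p + q ≤ t ∧ FullChainI A C t := by
  obtain ⟨c1, hh1, hl1, hlen1⟩ := h1
  obtain ⟨c2, hh2, hl2, hlen2⟩ := h2
  rcases eq_or_lt_of_le hBB with heq | hlt
  · refine ⟨p + q, le_rfl, c1.smash c2 (by rw [hl1, hh2, heq]), ?_, ?_, by simp [hlen1, hlen2]⟩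
    · rw [RelSeries.head_smash]; exact hh1
    · rw [RelSeries.last_smash]; exact hl2
  · refine ⟨p + q + 1, by omega, c1.append c2 (by rw [hl1, hh2]; exact hlt), ?_, ?_, ?_⟩
    · rw [RelSeries.head_append]; exact hh1
    · rw [RelSeries.last_append]; exact hl2
    · simp [RelSeries.append, hlen1, hlen2]

set_option maxHeartbeats 1000000 in
lemma vs_data [IsNoetherianRing R] [IsLocalRing R] {A B : Ideal R} (hAB : A ≤ B)
    (htor : maximalIdeal R * B ≤ A) :
    ∃ n : ℕ, Bnd A B n ∧ FullChainI A B n ∧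
      (∀ (k : ℕ) (f : Fin k → R), (∀ i, f i ∈ B) →
        B ≤ Ideal.span (Set.range f) ⊔ A → n ≤ k) ∧
      ∃ y : Fin n → R, (∀ i, y i ∈ B) ∧ B ≤ A ⊔ Ideal.span (Set.range y) := by
  classical
  set m : Ideal R := maximalIdeal R with hm_def
  haveI hmmax : m.IsMaximal := IsLocalRing.maximalIdeal.isMaximal R
  set K := R ⧸ m with hKdef
  letI : Field K := Ideal.Quotient.field m
  set A' : Submodule R ↥B := Submodule.comap B.subtype A with hA'def
  set V := ↥B ⧸ A' with hVdef
  set π : ↥B →ₗ[R] V := A'.mkQ with hπdef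
  have hπsurj : Function.Surjective π := A'.mkQ_surjective
  have hπeq : ∀ (z w : ↥B), π z = π w ↔ (z : R) - (w : R) ∈ A := by
    intro z w
    rw [hπdef, Submodule.mkQ_apply, Submodule.mkQ_apply, Submodule.Quotient.eq, hA'def]
    simp [Submodule.mem_comap]
  have htorV : Module.IsTorsionBySet R V (m : Set R) := by
    intro v a
    obtain ⟨⟨z, hz⟩, rfl⟩ := hπsurj v
    rw [← map_smul, hπdef, Submodule.mkQ_apply, Submodule.Quotient.mk_eq_zero, hA'def,
      Submodule.mem_comap]
    show (a.1 • z : R) ∈ A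
    rw [smul_eq_mul]
    exact htor (Ideal.mul_mem_mul a.2 hz)
  letI : Module K V := htorV.module
  haveI : IsScalarTower R K V := htorV.isScalarTower (S := R)
  haveI : Module.Finite R ↥B := ⟨IsNoetherian.noetherian ⊤⟩
  haveI : Module.Finite R V := Module.Finite.of_surjective π hπsurj
  haveI : Module.Finite K V := Module.Finite.of_restrictScalars_finite R K V
  -- transfer of R-submodules of V to K-submodules
  let toK : Submodule R V → Submodule K V := fun W =>
    { carrier := W
      add_mem' := fun h1 h2 => W.add_mem h1 h2
      zero_mem' := W.zero_mem
      smul_mem' := by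
        intro c v hv
        obtain ⟨a, rfl⟩ := Ideal.Quotient.mk_surjective c
        rw [htorV.mk_smul]
        exact W.smul_mem a hv }
  have toK_mem : ∀ (W : Submodule R V) (v : V), v ∈ toK W ↔ v ∈ W := fun _ _ => Iff.rfl
  have toK_le : ∀ {W W' : Submodule R V}, W ≤ W' → toK W ≤ toK W' := fun h v hv => h hv
  have toK_lt : ∀ {W W' : Submodule R V}, W < W' → toK W < toK W' := by
    intro W W' h
    refine lt_of_le_of_ne (toK_le h.le) (fun heq => h.ne ?_)
    ext v
    rw [← toK_mem W v, ← toK_mem W' v, heq]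
  -- The submodule of V attached to an ideal
  let SX : Ideal R → Submodule R V := fun X => Submodule.map π (Submodule.comap B.subtype X)
  have SX_mono : Monotone SX := fun X Y h =>
    Submodule.map_mono (Submodule.comap_mono h)
  have SX_strict : ∀ {X Y : Ideal R}, A ≤ X → X < Y → Y ≤ B → SX X < SX Y := by
    intro X Y hAX hXY hYB
    refine lt_of_le_of_ne (SX_mono hXY.le) (fun heq => ?_)
    obtain ⟨z, hzY, hzX⟩ := SetLike.exists_of_lt hXY
    have hzB : z ∈ B := hYB hzY
    have h1 : π ⟨z, hzB⟩ ∈ SX Y := ⟨⟨z, hzB⟩, hzY, rfl⟩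
    rw [← heq] at h1
    obtain ⟨u, huX, huz⟩ := h1
    have hs : (u : R) - z ∈ A := (hπeq u ⟨z, hzB⟩).1 huz
    have : z ∈ X := by
      have hz' : z = (u : R) - ((u : R) - z) := by ring
      rw [hz']
      exact X.sub_mem huX (hAX hs)
    exact hzX this
  have SX_B : SX B = ⊤ := by
    show Submodule.map π (Submodule.comap B.subtype B) = ⊤
    rw [show Submodule.comap B.subtype B = ⊤ from Submodule.comap_subtype_self B]
    rw [Submodule.map_top, hπdef, Submodule.range_mkQ]
  -- the dimension
  set n := Module.finrank K V with hn
  have hBnd : Bnd A B n := by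
    refine ⟨fun X => Module.finrank K (toK (SX X)), fun X Y h =>
      Submodule.finrank_mono (toK_le (SX_mono h)), fun X Y hAX hXY hYB =>
      Submodule.finrank_lt_finrank_of_lt (toK_lt (SX_strict hAX hXY hYB)), ?_⟩
    show Module.finrank K (toK (SX B)) ≤ Module.finrank K (toK (SX A)) + n
    have h1 : Module.finrank K (toK (SX B)) ≤ n := by
      rw [hn]; exact Submodule.finrank_le (toK (SX B))
    exact h1.trans (Nat.le_add_left n _)
  -- the lattice map from subspaces of V to ideals
  let F : Submodule K V → Ideal R := fun W =>
    Submodule.map B.subtype (Submodule.comap π (W.restrictScalars R))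
  have Fmono : Monotone F := fun W W' h =>
    Submodule.map_mono (Submodule.comap_mono (fun v hv => h hv))
  have Finj : Function.Injective F := by
    intro W W' h
    have h1 := Submodule.map_injective_of_injective B.injective_subtype h
    have h2 := Submodule.comap_injective_of_surjective hπsurj h1
    exact Submodule.restrictScalars_injective R K V h2
  have Fstrict : StrictMono F := Fmono.strictMono_of_injective Finj
  have Fbot : F ⊥ = A := by
    show Submodule.map B.subtype (Submodule.comap π ((⊥ : Submodule K V).restrictScalars R)) = A
    rw [Submodule.restrictScalars_bot, Submodule.comap_bot, hπdef, Submodule.ker_mkQ, hA'def,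
      Submodule.map_comap_subtype]
    exact inf_eq_right.2 hAB
  have Ftop : F ⊤ = B := by
    show Submodule.map B.subtype (Submodule.comap π ((⊤ : Submodule K V).restrictScalars R)) = B
    rw [Submodule.restrictScalars_top, Submodule.comap_top, Submodule.map_subtype_top]
  have hChain : FullChainI A B n := by
    let bV : Module.Basis (Fin n) K V := Module.finBasis K V
    let W : Fin (n + 1) → Submodule K V := fun i =>
      Submodule.span K (bV '' {j : Fin n | (j : ℕ) < (i : ℕ)})
    have Wstrict : ∀ (i : Fin n), W i.castSucc < W i.succ := by
      intro i
      have hsubset : {j : Fin n | (j : ℕ) < ((i.castSucc : Fin (n+1)) : ℕ)} ⊆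
          {j : Fin n | (j : ℕ) < ((i.succ : Fin (n+1)) : ℕ)} := by
        intro j hj
        simp only [Set.mem_setOf_eq, Fin.coe_castSucc, Fin.val_succ] at *
        omega
      refine lt_of_le_of_ne (Submodule.span_mono (Set.image_mono hsubset)) (fun heq => ?_)
      have hmem : bV i ∈ W i.succ :=
        Submodule.subset_span ⟨i, by simp [Fin.val_succ], rfl⟩
      rw [← heq] at hmem
      exact (bV.linearIndependent.notMem_span_image (by simp)) hmem
    have hW0 : W 0 = ⊥ := by
      have h0 : {j : Fin n | (j : ℕ) < ((0 : Fin (n+1)) : ℕ)} = ∅ := by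
        ext j; simp
      show Submodule.span K (bV '' {j : Fin n | (j : ℕ) < ((0 : Fin (n+1)) : ℕ)}) = ⊥
      rw [h0, Set.image_empty, Submodule.span_empty]
    have hWlast : W (Fin.last n) = ⊤ := by
      have h0 : {j : Fin n | (j : ℕ) < ((Fin.last n : Fin (n+1)) : ℕ)} = Set.univ := by
        ext j; simp [Fin.val_last, j.2]
      show Submodule.span K (bV '' _) = ⊤
      rw [h0, Set.image_univ, bV.span_eq]
    refine ⟨⟨n, fun i => F (W i), fun i => Fstrict (Wstrict i)⟩, ?_, ?_, rfl⟩
    · show F (W 0) = A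
      rw [hW0, Fbot]
    · show F (W (Fin.last n)) = B
      rw [hWlast, Ftop]
  refine ⟨n, hBnd, hChain, ?_, ?_⟩
  · -- spanning bound
    intro k f hf hspan
    have hsub : Ideal.span (Set.range f) ≤ B := by
      rw [Ideal.span_le]
      rintro _ ⟨i, rfl⟩
      exact hf i
    set g : Fin k → V := fun i => π ⟨f i, hf i⟩ with hg
    have key : ∀ (s : R) (hs : s ∈ Ideal.span (Set.range f)),
        π ⟨s, hsub hs⟩ ∈ Submodule.span K (Set.range g) := by
      intro s hs
      induction hs using Submodule.span_induction with
      | mem s hsm =>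
        obtain ⟨i, rfl⟩ := hsm
        exact Submodule.subset_span ⟨i, rfl⟩
      | zero =>
        have h0 : π ⟨(0:R), hsub (Ideal.zero_mem _)⟩ = 0 := by
          rw [show (⟨(0:R), hsub (Ideal.zero_mem _)⟩ : ↥B) = 0 from rfl, map_zero]
        rw [h0]; exact Submodule.zero_mem _
      | add u v hu hv ihu ihv =>
        have h0 : (⟨u + v, hsub (Ideal.add_mem _ hu hv)⟩ : ↥B) =
            ⟨u, hsub hu⟩ + ⟨v, hsub hv⟩ := rfl
        rw [h0, map_add]
        exact Submodule.add_mem _ ihu ihv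
      | smul a u hu ihu =>
        have h0 : (⟨a • u, hsub (Submodule.smul_mem _ a hu)⟩ : ↥B) =
            a • (⟨u, hsub hu⟩ : ↥B) := rfl
        rw [h0, map_smul, ← htorV.mk_smul]
        exact Submodule.smul_mem _ _ ihu
    have hspanTop : Submodule.span K (Set.range g) = ⊤ := by
      rw [eq_top_iff]
      rintro v -
      obtain ⟨⟨z, hzB⟩, rfl⟩ := hπsurj v
      obtain ⟨s, hs, a, ha, hza⟩ := Submodule.mem_sup.1 (hspan hzB)
      have hsB : s ∈ B := hsub hs
      have h0 : π ⟨z, hzB⟩ = π ⟨s, hsB⟩ := by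
        rw [hπeq]
        show z - s ∈ A
        have h1 : z - s = a := by rw [← hza]; ring
        rw [h1]; exact ha
      rw [h0]
      exact key s hs
    have h1 : Module.finrank K (Submodule.span K (Set.range g)) ≤
        (Set.range g).toFinset.card := finrank_span_le_card (Set.range g)
    rw [hspanTop, finrank_top] at h1
    refine le_trans (le_of_eq hn) (h1.trans ?_)
    rw [Set.toFinset_range]
    exact (Finset.card_image_le).trans (by simp)
  · -- lifts of a basis generate B over A
    let bV : Module.Basis (Fin n) K V := Module.finBasis K V
    have hsurj : ∀ i : Fin n, ∃ z : ↥B, π z = bV i := fun i => hπsurj _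
    choose yy hyy using hsurj
    refine ⟨fun i => (yy i : R), fun i => (yy i).2, ?_⟩
    set U : Ideal R := A ⊔ Ideal.span (Set.range fun i => (yy i : R)) with hU
    have hD : ∀ w : V, w ∈ Submodule.map π (Submodule.comap B.subtype U) := by
      intro w
      have hw : w ∈ Submodule.span K (Set.range bV) := by rw [bV.span_eq]; trivial
      induction hw using Submodule.span_induction with
      | mem v hv =>
        obtain ⟨i, rfl⟩ := hv
        refine ⟨yy i, ?_, hyy i⟩
        show (yy i : R) ∈ U
        exact le_sup_right (α := Ideal R) (Submodule.subset_span ⟨i, rfl⟩)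
      | zero => exact Submodule.zero_mem _
      | add u v hu hv ihu ihv => exact Submodule.add_mem _ ihu ihv
      | smul c v hv ihv =>
        obtain ⟨a, rfl⟩ := Ideal.Quotient.mk_surjective c
        rw [htorV.mk_smul]
        exact Submodule.smul_mem _ a ihv
    intro z hzB
    obtain ⟨u, hu, huz⟩ := hD (π ⟨z, hzB⟩)
    have hz' : z - (u : R) ∈ A := by
      have h0 := (hπeq ⟨z, hzB⟩ u).1 huz.symm
      simpa using h0
    have h1 : z = (u : R) + (z - (u : R)) := by ring
    rw [h1]
    exact U.add_mem hu (le_sup_left (α := Ideal R) hz')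

lemma exists_bnd_pow [IsNoetherianRing R] [IsLocalRing R] :
    ∀ i : ℕ, ∃ b : ℕ, Bnd ((maximalIdeal R) ^ i) (⊤ : Ideal R) b := by
  intro i
  induction i with
  | zero => exact ⟨0, by rw [pow_zero, Ideal.one_eq_top]; exact bnd_refl ⊤⟩
  | succ i ih =>
    obtain ⟨b, hb⟩ := ih
    have h1 : (maximalIdeal R) ^ (i + 1) ≤ (maximalIdeal R) ^ i :=
      Ideal.pow_le_pow_right (by omega)
    have h2 : maximalIdeal R * ((maximalIdeal R) ^ i) ≤ (maximalIdeal R) ^ (i + 1) := by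
      rw [pow_succ]
      exact le_of_eq (mul_comm _ _)
    obtain ⟨a, ha, -, -, -⟩ := vs_data h1 h2
    exact ⟨a + b, bnd_comp h1 le_top ha hb⟩

end MFullAux

set_option maxHeartbeats 2000000 in
open MFullAux in
/-- If a parameter ideal `Q` of a Noetherian local ring with positive depth is `𝔪`-full,
then `R` is regular. -/
theorem regular_of_mFull_parameter {R : Type*} [CommRing R] [IsNoetherianRing R]
    [IsLocalRing R]
    (hdepth : ∃ x ∈ maximalIdeal R, x ∈ nonZeroDivisors R)
    (Q : Ideal R) (hQ : IsParameterIdeal Q)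
    (hfull : ∃ x, x ∈ maximalIdeal R ∧ x ∉ (maximalIdeal R) ^ 2 ∧
      Submodule.colon (Q * maximalIdeal R) (Ideal.span {x}) = Q) :
    IsRegularLocal R := by
  classical
  obtain ⟨⟨k, f, hQspan, hkdim⟩, hrad⟩ := hQ
  obtain ⟨x, hxm, -, hcolon⟩ := hfull
  have hQm : Q ≤ maximalIdeal R := hrad ▸ Ideal.le_radical
  have hfQ : ∀ i, f i ∈ Q := fun i => hQspan ▸ Ideal.subset_span ⟨i, rfl⟩
  -- a power of the maximal ideal is contained in `Q`
  obtain ⟨nn, hnn⟩ := Ideal.exists_pow_le_of_le_radical_of_fg_radical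
    (le_of_eq hrad.symm) (hrad ▸ IsNoetherian.noetherian (maximalIdeal R))
  obtain ⟨B₀, hB₀⟩ := exists_bnd_pow (R := R) (nn + 1)
  have hpowQ : (maximalIdeal R) ^ (nn + 1) ≤ Q :=
    le_trans (Ideal.pow_le_pow_right (by omega)) hnn
  have hcap : ∀ (Z : Ideal R) (t : ℕ), FullChainI Q Z t → t ≤ B₀ := by
    rintro Z t ⟨c, hh, hl, hlen⟩
    rw [← hlen]
    exact chain_le_bnd hB₀ c (by rw [hh]; exact hpowQ) le_top
  -- the maximal-chain rank function on the interval `[Q, 𝔪]`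
  set B₁ := B₀ + 1 with hB₁
  set P : Ideal R → ℕ → Prop :=
    fun X t => FullChainI Q ((X ⊓ maximalIdeal R) ⊔ Q) t with hP
  have hPseed : ∀ X : Ideal R, ∃ t ≤ B₁, P X t := by
    intro X
    rcases eq_or_lt_of_le (le_sup_right : Q ≤ (X ⊓ maximalIdeal R) ⊔ Q) with heq | hlt
    · refine ⟨0, by omega, ?_⟩
      show FullChainI Q ((X ⊓ maximalIdeal R) ⊔ Q) 0
      rw [← heq]
      exact fullChainI_singleton Q
    · exact ⟨1, by omega, fullChainI_pair hlt⟩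
  have hPcap : ∀ (X : Ideal R) (t : ℕ), P X t → t ≤ B₀ := fun X t h => hcap _ t h
  set ρb : Ideal R → ℕ := fun X => Nat.findGreatest (P X) B₁ with hρb
  have hρb_spec : ∀ X : Ideal R, P X (ρb X) := by
    intro X
    obtain ⟨t, ht, hPt⟩ := hPseed X
    exact Nat.findGreatest_spec ht hPt
  have hρb_mono : Monotone ρb := by
    intro X Y hXY
    have hchain := hρb_spec X
    have hle : (X ⊓ maximalIdeal R) ⊔ Q ≤ (Y ⊓ maximalIdeal R) ⊔ Q :=
      sup_le_sup_right (inf_le_inf_right _ hXY) Q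
    rcases eq_or_lt_of_le hle with heq | hlt
    · have hPY : P Y (ρb X) := by
        show FullChainI Q ((Y ⊓ maximalIdeal R) ⊔ Q) (ρb X)
        rw [← heq]
        exact hchain
      exact Nat.le_findGreatest (le_trans (hPcap X _ hchain) (by omega)) hPY
    · have hPY : P Y (ρb X + 1) := fullChainI_snoc hchain hlt
      have h1 : ρb X + 1 ≤ B₁ := by
        have := hPcap Y _ hPY; omega
      exact le_trans (by omega) (Nat.le_findGreatest h1 hPY)
  have hρb_strict : ∀ X Y : Ideal R, Q ≤ X → X < Y → Y ≤ maximalIdeal R → ρb X < ρb Y := by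
    intro X Y hQX hXY hYm
    have hXeq : (X ⊓ maximalIdeal R) ⊔ Q = X := by
      rw [inf_eq_left.2 (hXY.le.trans hYm), sup_eq_left.2 hQX]
    have hYeq : (Y ⊓ maximalIdeal R) ⊔ Q = Y := by
      rw [inf_eq_left.2 hYm, sup_eq_left.2 (hQX.trans hXY.le)]
    have hchain : FullChainI Q X (ρb X) := by
      have h0 : FullChainI Q ((X ⊓ maximalIdeal R) ⊔ Q) (ρb X) := hρb_spec X
      rwa [hXeq] at h0
    have hPY : P Y (ρb X + 1) := by
      show FullChainI Q ((Y ⊓ maximalIdeal R) ⊔ Q) (ρb X + 1)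
      rw [hYeq]
      exact fullChainI_snoc hchain hXY
    have h1 : ρb X + 1 ≤ B₁ := by have := hPcap Y _ hPY; omega
    exact lt_of_lt_of_le (Nat.lt_succ_self _) (Nat.le_findGreatest h1 hPY)
  set b := ρb (maximalIdeal R) with hb
  have hBndQm : Bnd Q (maximalIdeal R) b :=
    ⟨ρb, hρb_mono, hρb_strict, Nat.le_add_left _ _⟩
  have hchainQm : FullChainI Q (maximalIdeal R) b := by
    have h0 : FullChainI Q ((maximalIdeal R ⊓ maximalIdeal R) ⊔ Q) b :=
      hρb_spec (maximalIdeal R)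
    rwa [inf_idem, sup_eq_left.2 hQm] at h0
  -- data for the interval `[Q𝔪, Q]`
  obtain ⟨μ, hBndμ, -, hμle, -⟩ := vs_data (A := Q * maximalIdeal R) (B := Q)
    Ideal.mul_le_left (le_of_eq (mul_comm _ _))
  have hμk : μ ≤ k := hμle k f hfQ (by rw [← hQspan]; exact le_sup_left)
  -- data for the interval `[𝔪² + (x), 𝔪]`
  have hT'le : maximalIdeal R * maximalIdeal R ⊔ Ideal.span {x} ≤ maximalIdeal R :=
    sup_le Ideal.mul_le_right (Ideal.span_le.2 (by simpa using hxm))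
  obtain ⟨r, -, hChainr, -, yy, hyymem, hyygen⟩ := vs_data
    (A := maximalIdeal R * maximalIdeal R ⊔ Ideal.span {x}) (B := maximalIdeal R)
    hT'le le_sup_left
  -- a chain of length `b+1` from `Q𝔪` to `(x) + Q𝔪`, the image of a chain from `Q` to `R`
  -- under the map `X ↦ xX + Q𝔪`; this is where `𝔪`-fullness is used.
  have hmtop : maximalIdeal R < (⊤ : Ideal R) :=
    lt_top_iff_ne_top.2 (IsLocalRing.maximalIdeal.isMaximal R).ne_top
  have hchainQtop : FullChainI Q (⊤ : Ideal R) (b + 1) := fullChainI_snoc hchainQm hmtop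
  have hφchain : FullChainI (Q * maximalIdeal R)
      (Ideal.span {x} ⊔ Q * maximalIdeal R) (b + 1) := by
    obtain ⟨c, hh, hl, hlen⟩ := hchainQtop
    set φ : Ideal R → Ideal R :=
      fun X => Submodule.map (LinearMap.lsmul R R x) X ⊔ Q * maximalIdeal R with hφ
    have hφmono : Monotone φ := fun X Y h => sup_le_sup_right (Submodule.map_mono h) _
    have hφstrict : ∀ X Y : Ideal R, Q ≤ X → X < Y → φ X < φ Y := by
      intro X Y hQX hXY
      refine lt_of_le_of_ne (hφmono hXY.le) (fun heq => hXY.ne ?_)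
      refine le_antisymm hXY.le (fun y hy => ?_)
      have h1 : x * y ∈ φ Y := by
        rw [hφ]
        exact le_sup_left (α := Ideal R) ⟨y, hy, by
          rw [LinearMap.lsmul_apply, smul_eq_mul]⟩
      rw [← heq, hφ] at h1
      obtain ⟨s, hs, a, ha, hsa⟩ := Submodule.mem_sup.1 h1
      obtain ⟨u, huX, rfl⟩ := hs
      have hsval : (LinearMap.lsmul R R x) u = x * u := by
        rw [LinearMap.lsmul_apply, smul_eq_mul]
      rw [hsval] at hsa
      have h2 : x * (y - u) ∈ Q * maximalIdeal R := by
        have haeq : x * (y - u) = a := by rw [mul_sub, ← hsa]; ring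
        rw [haeq]; exact ha
      have h3 : y - u ∈ Submodule.colon (Q * maximalIdeal R) (Ideal.span {x}) := by
        rw [Submodule.mem_colon]
        intro p hp
        obtain ⟨cc, rfl⟩ := Ideal.mem_span_singleton'.1 hp
        have : (y - u) • (cc * x) = cc • (x * (y - u)) := by
          simp only [smul_eq_mul]; ring
        rw [this]
        exact Submodule.smul_mem _ cc h2
      rw [hcolon] at h3
      have hyX : y = u + (y - u) := by ring
      rw [hyX]
      exact X.add_mem huX (hQX h3)
    have hQhead : ∀ i : Fin (c.length + 1), Q ≤ c i := by
      intro i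
      rw [← hh]
      exact c.monotone (Fin.zero_le _)
    refine ⟨⟨c.length, fun i => φ (c i), fun i =>
      hφstrict _ _ (hQhead i.castSucc) (c.step i)⟩, ?_, ?_, by rw [hlen]⟩
    · show φ (c 0) = Q * maximalIdeal R
      have h0 : c 0 = Q := hh
      rw [h0, hφ]
      refine sup_eq_right.2 ?_
      rintro _ ⟨q, hq, rfl⟩
      rw [LinearMap.lsmul_apply, smul_eq_mul, mul_comm x q]
      exact Ideal.mul_mem_mul hq hxm
    · show φ (c (Fin.last _)) = Ideal.span {x} ⊔ Q * maximalIdeal R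
      have h0 : c (Fin.last _) = ⊤ := hl
      have hmaptop : Submodule.map (LinearMap.lsmul R R x) (⊤ : Ideal R) = Ideal.span {x} := by
        apply le_antisymm
        · rintro _ ⟨u, -, rfl⟩
          rw [LinearMap.lsmul_apply, smul_eq_mul]
          exact Ideal.mem_span_singleton.2 ⟨u, rfl⟩
        · rw [Ideal.span_le]
          intro z hz
          have hzx : z = x := hz
          subst hzx
          exact ⟨1, trivial, by rw [LinearMap.lsmul_apply, smul_eq_mul, mul_one]⟩
      rw [h0]
      show Submodule.map (LinearMap.lsmul R R x) (⊤ : Ideal R) ⊔ Q * maximalIdeal R = _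
      rw [hmaptop]
  -- combine the two chains
  have hTT' : Ideal.span {x} ⊔ Q * maximalIdeal R ≤
      maximalIdeal R * maximalIdeal R ⊔ Ideal.span {x} :=
    sup_le le_sup_right (le_trans (Ideal.mul_mono hQm le_rfl) le_sup_left)
  obtain ⟨t, ht, hcomb⟩ := fullChainI_trans hφchain hChainr hTT'
  -- the upper bound
  have hupper : Bnd (Q * maximalIdeal R) (maximalIdeal R) (μ + b) :=
    bnd_comp Ideal.mul_le_left hQm hBndμ hBndQm
  have htle : t ≤ μ + b := by
    obtain ⟨c2, hh2, hl2, hlen2⟩ := hcomb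
    rw [← hlen2]
    exact chain_le_bnd hupper c2 (le_of_eq hh2.symm) (le_of_eq hl2)
  have hrk : r + 1 ≤ μ := by omega
  have hrk1 : r + 1 ≤ k := hrk.trans hμk
  -- generation of the maximal ideal by `x` and the lifts `yy`
  set N : Ideal R := Ideal.span ({x} ∪ Set.range yy) with hN
  have hNle : N ≤ maximalIdeal R := by
    rw [hN, Ideal.span_le]
    rintro z (rfl | ⟨i, rfl⟩)
    · exact hxm
    · exact hyymem i
  have hgen : maximalIdeal R ≤ N ⊔ maximalIdeal R • maximalIdeal R := by
    refine le_trans hyygen (le_of_eq ?_)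
    rw [smul_eq_mul, hN, Ideal.span_union]
    have : Ideal.span {x} ⊔ Ideal.span (Set.range yy) ⊔
        maximalIdeal R * maximalIdeal R =
        maximalIdeal R * maximalIdeal R ⊔ Ideal.span {x} ⊔ Ideal.span (Set.range yy) := by
      rw [sup_comm (Ideal.span {x} ⊔ Ideal.span (Set.range yy)) _, ← sup_assoc]
    rw [this]
  have hmN : maximalIdeal R = N := by
    refine le_antisymm ?_ hNle
    refine Submodule.le_of_le_smul_of_le_jacobson_bot (IsNoetherian.noetherian _) ?_ hgen
    rw [IsLocalRing.jacobson_eq_maximalIdeal (⊥ : Ideal R) bot_ne_top]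
  -- assemble the generating family of size `k`
  set g : Fin (r + 1) → R := Fin.cons x yy with hg
  set F : Fin k → R := fun i => if h : (i : ℕ) < r + 1 then g ⟨i, h⟩ else 0 with hF
  have hFg : ∀ (i : Fin k) (h : (i : ℕ) < r + 1), F i = g ⟨(i : ℕ), h⟩ := by
    intro i h
    simp only [hF]
    rw [dif_pos h]
  have hspanF : Ideal.span (Set.range F) = N := by
    apply le_antisymm
    · rw [Ideal.span_le]
      rintro _ ⟨i, rfl⟩
      by_cases h : (i : ℕ) < r + 1
      · have hFi : F i = g ⟨(i : ℕ), h⟩ := by rw [hF]; simp only [dif_pos h]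
        rw [hFi]
        refine Fin.cases ?_ ?_ (⟨(i : ℕ), h⟩ : Fin (r + 1))
        · rw [hg, Fin.cons_zero]
          exact Ideal.subset_span (Or.inl rfl)
        · intro j
          rw [hg, Fin.cons_succ]
          exact Ideal.subset_span (Or.inr ⟨j, rfl⟩)
      · have hFi : F i = 0 := by rw [hF]; simp only [dif_neg h]
        rw [hFi]
        exact N.zero_mem
    · rw [hN, Ideal.span_le]
      rintro z (hz | ⟨i, rfl⟩)
      · have hzx : z = x := hz
        have hk0 : (0 : ℕ) < k := by omega
        refine Ideal.subset_span ⟨⟨0, hk0⟩, ?_⟩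
        have h0 : ((⟨0, hk0⟩ : Fin k) : ℕ) < r + 1 := by show (0:ℕ) < r + 1; omega
        rw [hFg _ h0, hzx]
        show (Fin.cons x yy : Fin (r + 1) → R) _ = x
        have he : (⟨((⟨0, hk0⟩ : Fin k) : ℕ), h0⟩ : Fin (r + 1)) = 0 := by
          apply Fin.ext; simp
        rw [he, Fin.cons_zero]
      · have hi1 : ((i : ℕ) + 1) < k := by omega
        refine Ideal.subset_span ⟨⟨(i : ℕ) + 1, hi1⟩, ?_⟩
        have h0 : ((⟨(i : ℕ) + 1, hi1⟩ : Fin k) : ℕ) < r + 1 := by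
          show (i : ℕ) + 1 < r + 1; omega
        rw [hFg _ h0]
        show (Fin.cons x yy : Fin (r + 1) → R) _ = yy i
        have he : (⟨((⟨(i : ℕ) + 1, hi1⟩ : Fin k) : ℕ), h0⟩ : Fin (r + 1)) = Fin.succ i := by
          apply Fin.ext; simp [Fin.val_succ]
        rw [he, Fin.cons_succ]
  exact ⟨k, F, by rw [hspanF, ← hmN], hkdim⟩
end

section
/- Let $(R, \mathfrak{m}, K)$ be a Noetherian local ring with infinite residue field and $\mathrm{depth}\,R > 0$. If every parameter ideal $Q$ that is a reduction of $\mathfrak{m}$ satisfies $I\mathfrak{m}^{k+1}:\mathfrak{m} = I\mathfrak{m}^k$ for all $k \geq 0$ with $I = Q$ (i.e., $\mathfrak{d}_3(Q) = 0$), and some such parameter ideal reduction exists, then $R$ is regular. -/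
/-!
If `𝔪^(m+2) ⊆ Q𝔪^(m+1)`, then every `x ∈ 𝔪^(m+1)` satisfies `x𝔪 ⊆ Q𝔪^(m+1)`, so
`𝔪^(m+1) ⊆ Q𝔪^(m+1) : 𝔪 = Q𝔪^m`. Starting from the reduction equation `Q𝔪^r = 𝔪^(r+1)` and
descending to `m = 0` gives `𝔪 ⊆ Q`. Hence `𝔪 = Q` is generated by `dim R` elements.
-/

open IsLocalRing

namespace Ideal

variable {R : Type*} [CommRing R] {I M : Ideal R}

theorem pow_succ_le_mul_pow_of_colon_le {m : ℕ}
    (hcolon : (I * M ^ (m + 1)).colon M ≤ I * M ^ m)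
    (h : M ^ (m + 2) ≤ I * M ^ (m + 1)) : M ^ (m + 1) ≤ I * M ^ m := by
  intro x hx
  refine hcolon (Submodule.mem_colon.2 fun p hp => h ?_)
  rw [pow_succ _ (m + 1), smul_eq_mul]
  exact mul_mem_mul hx hp

theorem le_of_pow_succ_le_mul_pow (hcolon : ∀ k : ℕ, (I * M ^ (k + 1)).colon M ≤ I * M ^ k)
    {r : ℕ} (h : M ^ (r + 1) ≤ I * M ^ r) : M ≤ I := by
  induction r with
  | zero => simpa using h
  | succ r ih => exact ih (pow_succ_le_mul_pow_of_colon_le (hcolon r) h)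

end Ideal

theorem IsParameterIdeal.isRegularLocal {R : Type*} [CommRing R] [IsLocalRing R] {Q : Ideal R}
    (hQ : IsParameterIdeal Q) (hQm : Q = maximalIdeal R) : IsRegularLocal R := by
  obtain ⟨⟨k, f, hf, hk⟩, -⟩ := hQ
  exact ⟨k, f, hf ▸ hQm, hk⟩

theorem regular_of_daoNumber3_vanishing_general {R : Type*} [CommRing R]
    [IsLocalRing R]
    (hexists : ∃ Q : Ideal R, IsParameterIdeal Q ∧ Q ≤ maximalIdeal R ∧
      ∃ r : ℕ, Q * maximalIdeal R ^ r = maximalIdeal R ^ (r + 1))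
    (hall : ∀ Q : Ideal R, IsParameterIdeal Q → Q ≤ maximalIdeal R →
      (∃ r : ℕ, Q * maximalIdeal R ^ r = maximalIdeal R ^ (r + 1)) →
      ∀ k : ℕ, Submodule.colon (Q * maximalIdeal R ^ (k + 1)) (maximalIdeal R) =
        Q * maximalIdeal R ^ k) :
    IsRegularLocal R := by
  obtain ⟨Q, hQ, hle, r, hr⟩ := hexists
  have hcolon := hall Q hQ hle ⟨r, hr⟩
  have hge : maximalIdeal R ≤ Q :=
    Ideal.le_of_pow_succ_le_mul_pow (fun k => (hcolon k).le) hr.ge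
  exact hQ.isRegularLocal (le_antisymm hle hge)

/-- If some parameter ideal is a reduction of `𝔪` and every parameter ideal reduction `Q`
of `𝔪` satisfies `Q𝔪^(k+1) : 𝔪 = Q𝔪^k` for all `k ≥ 0` (i.e. `𝔡₃(Q) = 0`), then `R` is
regular. -/
theorem regular_of_daoNumber3_vanishing {R : Type*} [CommRing R] [IsNoetherianRing R]
    [IsLocalRing R] [Infinite (IsLocalRing.ResidueField R)]
    (hdepth : ∃ x ∈ maximalIdeal R, x ∈ nonZeroDivisors R)
    (hexists : ∃ Q : Ideal R, IsParameterIdeal Q ∧ Q ≤ maximalIdeal R ∧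
      ∃ r : ℕ, Q * maximalIdeal R ^ r = maximalIdeal R ^ (r + 1))
    (hall : ∀ Q : Ideal R, IsParameterIdeal Q → Q ≤ maximalIdeal R →
      (∃ r : ℕ, Q * maximalIdeal R ^ r = maximalIdeal R ^ (r + 1)) →
      ∀ k : ℕ, Submodule.colon (Q * maximalIdeal R ^ (k + 1)) (maximalIdeal R) =
        Q * maximalIdeal R ^ k) :
    IsRegularLocal R :=
  regular_of_daoNumber3_vanishing_general hexists hall
end
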